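/- arXiv:2604.26648 — 4 statements merged into one kernel-verified Lean document; each statement's English description precedes it below -/
import Mathlib

section
/- Let G be a Lie group acting smoothly on a smooth manifold Q by a left action l^Q such that the discrete Lagrangian L_d : Q × Q → ℝ is G-invariant for the diagonal action (L_d(l^Q_g(q₀), l^Q_g(q₁)) = L_d(q₀,q₁) for all g, q₀, q₁). Then the discrete momentum map J_d : Q × Q → 𝔤*, defined by J_d(q₀,q₁)(ξ) := -D₁L_d(q₀,q₁)(ξ_Q(q₀)), is G-equivariant with respect to the diagonal action on Q × Q and the coadjoint action on 𝔤*: J_d(l^Q_g(q₀), l^Q_g(q₁)) = Ad*_{g⁻¹}(J_d(q₀,q₁)) for all g ∈ G and (q₀,q₁) ∈ Q × Q. -/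
/-!
Differentiate the invariance `L (l h (l g q₀), l g q₁) = L (l (g⁻¹ h g) q₀, q₁)` in `h` at the
identity. By the chain rule through the orbit map, the left side gives the momentum of
`(l g q₀, l g q₁)` paired with `ξ`; the right side factors through the conjugation by `g⁻¹`,
whose derivative at `1` is `Ad_{g⁻¹}`, and gives the momentum of `(q₀, q₁)` paired with
`Ad_{g⁻¹} ξ`.
-/

open scoped Manifold

/-- Infinitesimal generator of a left action `l : G → Q → Q` corresponding to
`ξ ∈ 𝔤 = T₁G`: the derivative at the identity of the orbit map `g ↦ l g q`. -/
noncomputable def xiGen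
    {EG : Type*} [NormedAddCommGroup EG] [NormedSpace ℝ EG]
    {HG : Type*} [TopologicalSpace HG] (IG : ModelWithCorners ℝ EG HG)
    {G : Type*} [TopologicalSpace G] [ChartedSpace HG G] [Group G]
    {EQ : Type*} [NormedAddCommGroup EQ] [NormedSpace ℝ EQ]
    {HQ : Type*} [TopologicalSpace HQ] (IQ : ModelWithCorners ℝ EQ HQ)
    {Q : Type*} [TopologicalSpace Q] [ChartedSpace HQ Q]
    (l : G → Q → Q) (ξ : TangentSpace IG (1 : G)) (q : Q) : TangentSpace IQ q :=
  mfderiv IG IQ (fun g => l g q) (1 : G) ξ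

/-- The adjoint action of `g ∈ G` on `𝔤 = T₁G`: the derivative at the identity of
the conjugation `h ↦ g h g⁻¹`. -/
noncomputable def AdG
    {EG : Type*} [NormedAddCommGroup EG] [NormedSpace ℝ EG]
    {HG : Type*} [TopologicalSpace HG] (IG : ModelWithCorners ℝ EG HG)
    {G : Type*} [TopologicalSpace G] [ChartedSpace HG G] [Group G]
    (g : G) (ξ : TangentSpace IG (1 : G)) : TangentSpace IG (1 : G) :=
  mfderiv IG IG (fun h => g * h * g⁻¹) (1 : G) ξ

/-- Partial differential of the discrete Lagrangian in the first slot. -/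
noncomputable def D1Ld
    {EQ : Type*} [NormedAddCommGroup EQ] [NormedSpace ℝ EQ]
    {HQ : Type*} [TopologicalSpace HQ] (IQ : ModelWithCorners ℝ EQ HQ)
    {Q : Type*} [TopologicalSpace Q] [ChartedSpace HQ Q]
    (L : Q × Q → ℝ) (q0 q1 : Q) : TangentSpace IQ q0 →L[ℝ] ℝ :=
  mfderiv IQ 𝓘(ℝ, ℝ) (fun q => L (q, q1)) q0

section

variable {EG : Type*} [NormedAddCommGroup EG] [NormedSpace ℝ EG]
  {HG : Type*} [TopologicalSpace HG] {IG : ModelWithCorners ℝ EG HG}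
  {G : Type*} [TopologicalSpace G] [ChartedSpace HG G] [Group G]
  {EQ : Type*} [NormedAddCommGroup EQ] [NormedSpace ℝ EQ]
  {HQ : Type*} [TopologicalSpace HQ] {IQ : ModelWithCorners ℝ EQ HQ}
  {Q : Type*} [TopologicalSpace Q] [ChartedSpace HQ Q]
  {F : Type*} [NormedAddCommGroup F] [NormedSpace ℝ F]

theorem mfderiv_apply_xiGen {l : G → Q → Q} {q : Q} (hl₁ : l 1 q = q) {f : Q → F}
    (hf : MDifferentiableAt IQ 𝓘(ℝ, F) f q)
    (horb : MDifferentiableAt IG IQ (fun g => l g q) 1) (ξ : TangentSpace IG (1 : G)) :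
    mfderiv IQ 𝓘(ℝ, F) f q (xiGen IG IQ l ξ q)
      = mfderiv IG 𝓘(ℝ, F) (fun g => f (l g q)) 1 ξ :=
  (mfderiv_comp_apply_of_eq 1 hf horb hl₁ ξ).symm

theorem mfderiv_comp_conj_apply {n : WithTop ℕ∞} [ContMDiffMul IG n G] (hn : n ≠ 0)
    {f : G → F} (hf : MDifferentiableAt IG 𝓘(ℝ, F) f 1) (g : G) (ξ : TangentSpace IG (1 : G)) :
    mfderiv IG 𝓘(ℝ, F) (fun h => f (g * h * g⁻¹)) 1 ξ = mfderiv IG 𝓘(ℝ, F) f 1 (AdG IG g ξ) :=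
  have hconj : MDifferentiableAt IG IG (fun h : G => g * h * g⁻¹) 1 :=
    (contMDiff_mul_left.mul contMDiff_const).mdifferentiableAt hn
  mfderiv_comp_apply_of_eq 1 hf hconj (by group) ξ

end

theorem discrete_momentum_map_equivariant_general
    {EG : Type*} [NormedAddCommGroup EG] [NormedSpace ℝ EG]
    {HG : Type*} [TopologicalSpace HG] (IG : ModelWithCorners ℝ EG HG)
    {G : Type*} [TopologicalSpace G] [ChartedSpace HG G] [Group G] [LieGroup IG (⊤ : ℕ∞) G]
    {EQ : Type*} [NormedAddCommGroup EQ] [NormedSpace ℝ EQ]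
    {HQ : Type*} [TopologicalSpace HQ] (IQ : ModelWithCorners ℝ EQ HQ)
    {Q : Type*} [TopologicalSpace Q] [ChartedSpace HQ Q]
    (l : G → Q → Q)
    (hact : ContMDiff (IG.prod IQ) IQ (⊤ : ℕ∞) (fun p : G × Q => l p.1 p.2))
    (hact1 : ∀ q, l (1 : G) q = q)
    (hactmul : ∀ g h q, l (g * h) q = l g (l h q))
    (L : Q × Q → ℝ) (hL : ContMDiff (IQ.prod IQ) 𝓘(ℝ, ℝ) (⊤ : ℕ∞) L)
    (hinv : ∀ (g : G) (q0 q1 : Q), L (l g q0, l g q1) = L (q0, q1)) :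
    ∀ (g : G) (q0 q1 : Q) (ξ : TangentSpace IG (1 : G)),
      -(D1Ld IQ L (l g q0) (l g q1) (xiGen IG IQ l ξ (l g q0)))
        = -(D1Ld IQ L q0 q1 (xiGen IG IQ l (AdG IG g⁻¹ ξ) q0)) := by
  intro g q0 q1 ξ
  have horb (q : Q) : MDifferentiableAt IG IQ (fun h : G => l h q) 1 :=
    (hact.comp (contMDiff_id.prodMk contMDiff_const)).mdifferentiableAt (by simp)
  have hL₁ (q q' : Q) : MDifferentiableAt IQ 𝓘(ℝ, ℝ) (fun p => L (p, q')) q :=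
    (hL.comp (contMDiff_id.prodMk contMDiff_const)).mdifferentiableAt (by simp)
  have hconj : (fun h : G => L (l h (l g q0), l g q1))
      = fun h => L (l (g⁻¹ * h * g⁻¹⁻¹) q0, q1) := by
    funext h
    have hmove : l h (l g q0) = l g (l (g⁻¹ * h * g⁻¹⁻¹) q0) := by
      rw [← hactmul, ← hactmul]
      group
    rw [hmove, hinv]
  have hleft : D1Ld IQ L (l g q0) (l g q1) (xiGen IG IQ l ξ (l g q0))
      = mfderiv IG 𝓘(ℝ, ℝ) (fun h => L (l h (l g q0), l g q1)) 1 ξ :=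
    mfderiv_apply_xiGen (hact1 _) (hL₁ _ _) (horb _) ξ
  have hright : D1Ld IQ L q0 q1 (xiGen IG IQ l (AdG IG g⁻¹ ξ) q0)
      = mfderiv IG 𝓘(ℝ, ℝ) (fun h => L (l h q0, q1)) 1 (AdG IG g⁻¹ ξ) :=
    mfderiv_apply_xiGen (hact1 _) (hL₁ _ _) (horb _) _
  rw [neg_inj, hleft, hright, hconj]
  exact mfderiv_comp_conj_apply (n := (⊤ : ℕ∞)) (f := fun h => L (l h q0, q1)) (by simp)
    ((hL₁ _ _).comp_of_eq 1 (horb _) (hact1 _)) g⁻¹ ξ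

/-- the discrete momentum map
`J_d(q₀,q₁)(ξ) := -D₁L_d(q₀,q₁)(ξ_Q(q₀))` of a `G`-invariant discrete Lagrangian
is `G`-equivariant for the diagonal action on `Q × Q` and the coadjoint action on
`𝔤*`: `J_d(l_g q₀, l_g q₁)(ξ) = J_d(q₀,q₁)(Ad_{g⁻¹} ξ)`. -/
theorem discrete_momentum_map_equivariant
    {EG : Type*} [NormedAddCommGroup EG] [NormedSpace ℝ EG]
    {HG : Type*} [TopologicalSpace HG] (IG : ModelWithCorners ℝ EG HG)
    {G : Type*} [TopologicalSpace G] [ChartedSpace HG G] [Group G] [LieGroup IG (⊤ : ℕ∞) G]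
    {EQ : Type*} [NormedAddCommGroup EQ] [NormedSpace ℝ EQ]
    {HQ : Type*} [TopologicalSpace HQ] (IQ : ModelWithCorners ℝ EQ HQ)
    {Q : Type*} [TopologicalSpace Q] [ChartedSpace HQ Q] [IsManifold IQ (⊤ : ℕ∞) Q]
    (l : G → Q → Q)
    (hact : ContMDiff (IG.prod IQ) IQ (⊤ : ℕ∞) (fun p : G × Q => l p.1 p.2))
    (hact1 : ∀ q, l (1 : G) q = q)
    (hactmul : ∀ g h q, l (g * h) q = l g (l h q))
    (L : Q × Q → ℝ) (hL : ContMDiff (IQ.prod IQ) 𝓘(ℝ, ℝ) (⊤ : ℕ∞) L)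
    (hinv : ∀ (g : G) (q0 q1 : Q), L (l g q0, l g q1) = L (q0, q1)) :
    ∀ (g : G) (q0 q1 : Q) (ξ : TangentSpace IG (1 : G)),
      -(D1Ld IQ L (l g q0) (l g q1) (xiGen IG IQ l ξ (l g q0)))
        = -(D1Ld IQ L q0 q1 (xiGen IG IQ l (AdG IG g⁻¹ ξ) q0)) :=
  discrete_momentum_map_equivariant_general IG IQ l hact hact1 hactmul L hL hinv
end

section
/- Let G be a symmetry group of a discrete mechanical system (Q, L_d) with discrete momentum map J_d(q₀,q₁)(ξ) := -D₁L_d(q₀,q₁)(ξ_Q(q₀)). If a discrete curve q₀, q₁, q₂ satisfies the discrete Euler–Lagrange equation D₂L_d(q₀,q₁) + D₁L_d(q₁,q₂) = 0, then J_d(q₀,q₁) = J_d(q₁,q₂); i.e., the discrete momentum map is preserved along trajectories (discrete Noether's theorem). -/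
open scoped Manifold

/-- Partial differential of the discrete Lagrangian in the second slot. -/
noncomputable def D2Ld
    {EQ : Type*} [NormedAddCommGroup EQ] [NormedSpace ℝ EQ]
    {HQ : Type*} [TopologicalSpace HQ] (IQ : ModelWithCorners ℝ EQ HQ)
    {Q : Type*} [TopologicalSpace Q] [ChartedSpace HQ Q]
    (L : Q × Q → ℝ) (q0 q1 : Q) : TangentSpace IQ q1 →L[ℝ] ℝ :=
  mfderiv IQ 𝓘(ℝ, ℝ) (fun q => L (q0, q)) q1

/-! Differentiating the invariance `L_d (g • q₀, g • q₁) = L_d (q₀, q₁)` at `g = 1` in the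
direction `ξ` gives `D₁L_d(q₀,q₁)(ξ_Q q₀) + D₂L_d(q₀,q₁)(ξ_Q q₁) = 0`. The discrete
Euler–Lagrange equation, evaluated at `ξ_Q q₁`, turns the second term into
`-D₁L_d(q₁,q₂)(ξ_Q q₁)`, which is the conservation law. -/

section

variable {𝕜 : Type*} [NontriviallyNormedField 𝕜]
  {E : Type*} [NormedAddCommGroup E] [NormedSpace 𝕜 E]
  {H : Type*} [TopologicalSpace H] {I : ModelWithCorners 𝕜 E H}
  {M : Type*} [TopologicalSpace M] [ChartedSpace H M]
  {E' : Type*} [NormedAddCommGroup E'] [NormedSpace 𝕜 E']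
  {H' : Type*} [TopologicalSpace H'] {I' : ModelWithCorners 𝕜 E' H'}
  {N : Type*} [TopologicalSpace N] [ChartedSpace H' N]
  {F : Type*} [NormedAddCommGroup F] [NormedSpace 𝕜 F]

theorem mfderiv_apply_mfderiv_eq_zero_of_comp_eq_const {f : N → F} {φ : M → N} {x : M}
    {y : N} {c : F} (hx : φ x = y) (hf : MDifferentiableAt I' 𝓘(𝕜, F) f y)
    (hφ : MDifferentiableAt I I' φ x) (hconst : ∀ z, f (φ z) = c) (v : TangentSpace I x) :
    mfderiv I' 𝓘(𝕜, F) f y (mfderiv I I' φ x v) = 0 := by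
  subst hx
  have h := mfderiv_comp x hf hφ
  rw [show f ∘ φ = fun _ => c from funext hconst, mfderiv_const] at h
  exact (congrArg (· v) h).symm

end

section

variable {EG : Type*} [NormedAddCommGroup EG] [NormedSpace ℝ EG]
  {HG : Type*} [TopologicalSpace HG] {IG : ModelWithCorners ℝ EG HG}
  {G : Type*} [TopologicalSpace G] [ChartedSpace HG G]
  {EQ : Type*} [NormedAddCommGroup EQ] [NormedSpace ℝ EQ]
  {HQ : Type*} [TopologicalSpace HQ] {IQ : ModelWithCorners ℝ EQ HQ}
  {Q : Type*} [TopologicalSpace Q] [ChartedSpace HQ Q]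

theorem ContMDiff.mdifferentiableAt_orbit {n : WithTop ℕ∞} {l : G → Q → Q}
    (hact : ContMDiff (IG.prod IQ) IQ n (fun p : G × Q => l p.1 p.2)) (hn : n ≠ 0)
    (q : Q) (g : G) : MDifferentiableAt IG IQ (fun g => l g q) g :=
  (hact.mdifferentiable hn (g, q)).comp g (mdifferentiableAt_id.prodMk mdifferentiableAt_const)

theorem D1Ld_xiGen_add_D2Ld_xiGen_eq_zero [Group G] {l : G → Q → Q}
    (horbit : ∀ q, MDifferentiableAt IG IQ (fun g => l g q) 1) (hact1 : ∀ q, l 1 q = q)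
    {L : Q × Q → ℝ} {q0 q1 : Q} (hL : MDifferentiableAt (IQ.prod IQ) 𝓘(ℝ, ℝ) L (q0, q1))
    (hinv : ∀ g, L (l g q0, l g q1) = L (q0, q1)) (ξ : TangentSpace IG (1 : G)) :
    D1Ld IQ L q0 q1 (xiGen IG IQ l ξ q0) + D2Ld IQ L q0 q1 (xiGen IG IQ l ξ q1) = 0 := by
  have hdiag : mfderiv IG (IQ.prod IQ) (fun g => (l g q0, l g q1)) 1 ξ =
      (xiGen IG IQ l ξ q0, xiGen IG IQ l ξ q1) := by
    rw [(horbit q0).mfderiv_prod (horbit q1)]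
    rfl
  have h := mfderiv_apply_mfderiv_eq_zero_of_comp_eq_const (by simp [hact1]) hL
    ((horbit q0).prodMk (horbit q1)) hinv ξ
  rw [hdiag] at h
  exact (mfderiv_prod_eq_add_apply (I := IQ) (I' := IQ) (I'' := 𝓘(ℝ, ℝ))
    (v := (xiGen IG IQ l ξ q0, xiGen IG IQ l ξ q1)) hL).symm.trans h

end

theorem discrete_noether_general
    {EG : Type*} [NormedAddCommGroup EG] [NormedSpace ℝ EG]
    {HG : Type*} [TopologicalSpace HG] (IG : ModelWithCorners ℝ EG HG)
    {G : Type*} [TopologicalSpace G] [ChartedSpace HG G] [Group G]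
    {EQ : Type*} [NormedAddCommGroup EQ] [NormedSpace ℝ EQ]
    {HQ : Type*} [TopologicalSpace HQ] (IQ : ModelWithCorners ℝ EQ HQ)
    {Q : Type*} [TopologicalSpace Q] [ChartedSpace HQ Q]
    (l : G → Q → Q)
    (hact : ContMDiff (IG.prod IQ) IQ (⊤ : ℕ∞) (fun p : G × Q => l p.1 p.2))
    (hact1 : ∀ q, l (1 : G) q = q)
    (L : Q × Q → ℝ) (hL : ContMDiff (IQ.prod IQ) 𝓘(ℝ, ℝ) (⊤ : ℕ∞) L)
    (hinv : ∀ (g : G) (q0 q1 : Q), L (l g q0, l g q1) = L (q0, q1))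
    (q0 q1 q2 : Q)
    (hEL : D2Ld IQ L q0 q1 + D1Ld IQ L q1 q2 = 0) :
    ∀ ξ : TangentSpace IG (1 : G),
      -(D1Ld IQ L q0 q1 (xiGen IG IQ l ξ q0)) = -(D1Ld IQ L q1 q2 (xiGen IG IQ l ξ q1)) := by
  intro ξ
  have hsymm := D1Ld_xiGen_add_D2Ld_xiGen_eq_zero
    (fun q => hact.mdifferentiableAt_orbit (by simp) q 1) hact1
    (hL.mdifferentiableAt (by simp)) (hinv · q0 q1) ξ
  have hEL_ξ : D2Ld IQ L q0 q1 (xiGen IG IQ l ξ q1) + D1Ld IQ L q1 q2 (xiGen IG IQ l ξ q1) = 0 :=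
    congrArg (· (xiGen IG IQ l ξ q1)) hEL
  linarith

/-- discrete Noether's theorem: if the discrete curve `q₀,q₁,q₂`
satisfies the discrete Euler–Lagrange equation `D₂L_d(q₀,q₁) + D₁L_d(q₁,q₂) = 0`
and `L_d` is invariant under the diagonal `G`-action, then the discrete momentum
map `J_d(q₀,q₁)(ξ) := -D₁L_d(q₀,q₁)(ξ_Q(q₀))` satisfies `J_d(q₀,q₁) = J_d(q₁,q₂)`. -/
theorem discrete_noether
    {EG : Type*} [NormedAddCommGroup EG] [NormedSpace ℝ EG]
    {HG : Type*} [TopologicalSpace HG] (IG : ModelWithCorners ℝ EG HG)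
    {G : Type*} [TopologicalSpace G] [ChartedSpace HG G] [Group G] [LieGroup IG (⊤ : ℕ∞) G]
    {EQ : Type*} [NormedAddCommGroup EQ] [NormedSpace ℝ EQ]
    {HQ : Type*} [TopologicalSpace HQ] (IQ : ModelWithCorners ℝ EQ HQ)
    {Q : Type*} [TopologicalSpace Q] [ChartedSpace HQ Q] [IsManifold IQ (⊤ : ℕ∞) Q]
    (l : G → Q → Q)
    (hact : ContMDiff (IG.prod IQ) IQ (⊤ : ℕ∞) (fun p : G × Q => l p.1 p.2))
    (hact1 : ∀ q, l (1 : G) q = q)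
    (hactmul : ∀ g h q, l (g * h) q = l g (l h q))
    (L : Q × Q → ℝ) (hL : ContMDiff (IQ.prod IQ) 𝓘(ℝ, ℝ) (⊤ : ℕ∞) L)
    (hinv : ∀ (g : G) (q0 q1 : Q), L (l g q0, l g q1) = L (q0, q1))
    (q0 q1 q2 : Q)
    (hEL : D2Ld IQ L q0 q1 + D1Ld IQ L q1 q2 = 0) :
    ∀ ξ : TangentSpace IG (1 : G),
      -(D1Ld IQ L q0 q1 (xiGen IG IQ l ξ q0)) = -(D1Ld IQ L q1 q2 (xiGen IG IQ l ξ q1)) :=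
  discrete_noether_general IG IQ l hact hact1 L hL hinv q0 q1 q2 hEL
end

section
/- Let π : Q → Q/G be a principal G-bundle, γ : Q → G a level function (γ(l^Q_g(q)) = g γ(q) g⁻¹), and Hor ⊆ Q × Q a G-invariant embedded submanifold containing the graph Γ of q ↦ l^Q_{γ(q)}(q), such that (id_Q × π)|_{Hor} : Hor → Q × (Q/G) is an injective local diffeomorphism (an affine discrete connection). Then for any (q₀,q₁) ∈ 𝔘 := { (q₀, l^Q_g(q₁')) : (q₀,q₁') ∈ Hor, g ∈ G }, there is a unique g ∈ G such that (q₀, l^Q_{g⁻¹}(q₁)) ∈ Hor. -/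
/-- The canonical projection `π : Q → Q/G` onto the orbit space of a group action. -/
def orbitProj (G : Type*) {Q : Type*} [Group G] [MulAction G Q] (q : Q) :
    Quotient (MulAction.orbitRel G Q) :=
  Quotient.mk (MulAction.orbitRel G Q) q

/-- given an affine discrete connection `Hor` with level function `γ`
on the principal `G`-bundle `π : Q → Q/G` (so `Hor` is `G`-invariant for the
diagonal action, contains the graph `Γ` of `q ↦ γ(q) • q`, and
`(id × π)|_Hor` is injective), for every `(q₀,q₁)` in
`𝔘 := { (q₀, g • q₁') | (q₀,q₁') ∈ Hor, g ∈ G }` there is a unique `g ∈ G`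
with `(q₀, g⁻¹ • q₁) ∈ Hor`. -/
theorem affine_discrete_connection_unique_group_element
    {G Q : Type*} [Group G] [MulAction G Q]
    (hfree : ∀ (g : G) (q : Q), g • q = q → g = 1)
    (γ : Q → G) (hγ : ∀ (g : G) (q : Q), γ (g • q) = g * γ q * g⁻¹)
    (Hor : Set (Q × Q))
    (hΓ : ∀ q : Q, (q, γ q • q) ∈ Hor)
    (hinvHor : ∀ (g : G) (p : Q × Q), p ∈ Hor → (g • p.1, g • p.2) ∈ Hor)
    (hinj : ∀ p ∈ Hor, ∀ p' ∈ Hor,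
      p.1 = p'.1 → orbitProj G p.2 = orbitProj G p'.2 → p = p')
    (q0 q1 : Q)
    (hU : ∃ (q1' : Q) (g : G), (q0, q1') ∈ Hor ∧ q1 = g • q1') :
    ∃! g : G, (q0, g⁻¹ • q1) ∈ Hor := by
  obtain ⟨q1', g, hmem, rfl⟩ := hU
  refine ⟨g, by simpa using hmem, ?_⟩
  intro h hh
  have hmem' : (q0, g⁻¹ • g • q1') ∈ Hor := by simpa using hmem
  have horb : orbitProj G (h⁻¹ • g • q1') = orbitProj G (g⁻¹ • g • q1') :=
    Quotient.sound ⟨h⁻¹ * g, by simp [mul_smul]⟩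
  have heq := hinj _ hh _ hmem' rfl horb
  have heq2 : h⁻¹ • g • q1' = g⁻¹ • g • q1' :=
    congrArg Prod.snd heq
  have hfix : (g * h⁻¹) • (g • q1') = g • q1' := by
    rw [mul_smul, heq2]; simp [← mul_smul]
  have h1 := hfree _ _ hfix
  have : g = h := by
    have := mul_eq_one_iff_eq_inv.mp h1
    simpa using this
  exact this.symm
end

section
/- Let Hor be an affine discrete connection on the principal G-bundle π : Q → Q/G with level function γ, and let 𝒜_d : 𝔘 → G be its associated connection form (𝒜_d(q₀,q₁) is the unique g with (q₀, l^Q_{g⁻¹}(q₁)) ∈ Hor). Then for all (q₀,q₁) ∈ 𝔘 and all g₀, g₁ ∈ G, 𝒜_d(l^Q_{g₀}(q₀), l^Q_{g₁}(q₁)) = g₁ · 𝒜_d(q₀,q₁) · g₀⁻¹, and moreover Hor = { (q₀,q₁) ∈ 𝔘 : 𝒜_d(q₀,q₁) = e }. -/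
lemma orbitProj_smul_eq {G Q : Type*} [Group G] [MulAction G Q] (g : G) (q : Q) :
    orbitProj G (g • q) = orbitProj G q :=
  Quotient.sound ⟨g, rfl⟩

/-- the connection form `𝒜_d` of an affine discrete connection `Hor`
with level `γ` satisfies `𝒜_d(g₀•q₀, g₁•q₁) = g₁ 𝒜_d(q₀,q₁) g₀⁻¹` on its domain
`𝔘`, and `Hor = { (q₀,q₁) ∈ 𝔘 : 𝒜_d(q₀,q₁) = e }`. -/
theorem affine_discrete_connection_form_equivariance
    {G Q : Type*} [Group G] [MulAction G Q]
    (hfree : ∀ (g : G) (q : Q), g • q = q → g = 1)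
    (γ : Q → G) (hγ : ∀ (g : G) (q : Q), γ (g • q) = g * γ q * g⁻¹)
    (Hor : Set (Q × Q))
    (hΓ : ∀ q : Q, (q, γ q • q) ∈ Hor)
    (hinvHor : ∀ (g : G) (p : Q × Q), p ∈ Hor → (g • p.1, g • p.2) ∈ Hor)
    (hinj : ∀ p ∈ Hor, ∀ p' ∈ Hor,
      p.1 = p'.1 → orbitProj G p.2 = orbitProj G p'.2 → p = p')
    -- the domain `𝔘` of the connection form
    (U : Set (Q × Q)) (hU : U = {p : Q × Q | ∃ (q1' : Q) (g : G), (p.1, q1') ∈ Hor ∧ p.2 = g • q1'})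
    -- the connection form: `𝒜_d p` is the (unique) element with `(p.1, (𝒜_d p)⁻¹ • p.2) ∈ Hor`
    (A : Q × Q → G) (hA : ∀ p ∈ U, (p.1, (A p)⁻¹ • p.2) ∈ Hor) :
    (∀ p ∈ U, ∀ g0 g1 : G,
        (g0 • p.1, g1 • p.2) ∈ U ∧ A (g0 • p.1, g1 • p.2) = g1 * A p * g0⁻¹)
      ∧ Hor = {p : Q × Q | p ∈ U ∧ A p = 1} := by
  -- uniqueness of the connection form value
  have huniq : ∀ p ∈ U, ∀ h : G, (p.1, h⁻¹ • p.2) ∈ Hor → A p = h := by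
    intro p hp h hh
    have h1 := hA p hp
    have h2 := hinj _ h1 _ hh rfl (by
      show orbitProj G ((A p)⁻¹ • p.2) = orbitProj G (h⁻¹ • p.2)
      rw [orbitProj_smul_eq, orbitProj_smul_eq])
    have h3 : (A p)⁻¹ • p.2 = h⁻¹ • p.2 := congrArg Prod.snd h2
    have h4 : (h * (A p)⁻¹) • p.2 = p.2 := by
      rw [mul_smul, h3, ← mul_smul, mul_inv_cancel, one_smul]
    have := hfree _ _ h4
    have : h = A p := by
      have := mul_eq_one_iff_eq_inv.mp this
      simpa using this
    exact this.symm
  constructor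
  · intro p hp g0 g1
    have h1 := hA p hp
    have h2 : (g0 • p.1, g0 • ((A p)⁻¹ • p.2)) ∈ Hor := hinvHor g0 _ h1
    have hsnd : (g1 * A p * g0⁻¹)⁻¹ • (g1 • p.2) = g0 • ((A p)⁻¹ • p.2) := by
      rw [← mul_smul, ← mul_smul]
      congr 1
      group
    have hmemU : (g0 • p.1, g1 • p.2) ∈ U := by
      rw [hU]
      exact ⟨g0 • ((A p)⁻¹ • p.2), g1 * A p * g0⁻¹, h2, by
        show g1 • p.2 = (g1 * A p * g0⁻¹) • (g0 • ((A p)⁻¹ • p.2))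
        rw [← mul_smul, ← mul_smul]; congr 1; group⟩
    refine ⟨hmemU, huniq _ hmemU _ ?_⟩
    show ((g0 • p.1, g1 • p.2).1, (g1 * A p * g0⁻¹)⁻¹ • (g0 • p.1, g1 • p.2).2) ∈ Hor
    rw [hsnd]; exact h2
  · ext p
    constructor
    · intro hp
      have hpU : p ∈ U := by
        rw [hU]; exact ⟨p.2, 1, hp, (one_smul G p.2).symm⟩
      have := huniq p hpU 1 (by simpa using hp)
      exact ⟨hpU, this⟩
    · rintro ⟨hpU, hA1⟩
      have := hA p hpU
      rw [hA1] at this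
      simpa using this
end
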